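/- arXiv:2403.05590 — 2 statements merged into one kernel-verified Lean document; each statement's English description precedes it below -/
import Mathlib

section
/- Let (H, π, Φ) be the GNS triple of (A, φ) where φ is G-strongly quasi-invariant with continuous g ↦ x_g. Define U_g π(a)Φ = π(g(a) x_{g⁻¹}^{1/2})Φ. Then for all a ∈ A and g ∈ G, U_g π(a) U_g* = π(g(a)), i.e., conjugation by U_g implements the automorphism g on π(A). -/
open scoped ComplexOrder

/-!
Both `U_g ∘ π(a)` and `π(g(a)) ∘ U_g` send `π(b)Φ` to `π(g(a) g(b) x_{g⁻¹}^{1/2})Φ`; since the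
vectors `π(b)Φ` are dense, `U_g π(a) = π(g(a)) U_g`, and multiplying on the right by
`U_g* = U_g⁻¹` gives the claim.
-/

namespace ContinuousLinearMap

variable {R A E F Fσ : Type*} [Semiring R] [Semigroup A]
  [AddCommMonoid E] [Module R E] [TopologicalSpace E] [T2Space E]
  [FunLike F A (E →L[R] E)] [MulHomClass F A (E →L[R] E)]
  [FunLike Fσ A A] [MulHomClass Fσ A A]

theorem semiconjBy_of_apply_cyclic {π : F} {v : E} (hcyclic : Dense (Set.range fun a => π a v))
    {U : E →L[R] E} {σ : Fσ} {c : A} (hU : ∀ b, U (π b v) = π (σ b * c) v) (a : A) :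
    SemiconjBy U (π a) (π (σ a)) := by
  refine DFunLike.coe_injective <| Continuous.ext_on hcyclic (U * π a).continuous
    (π (σ a) * U).continuous ?_
  rintro _ ⟨b, rfl⟩
  calc U (π a (π b v)) = π (σ (a * b) * c) v := by
        rw [← mul_apply_eq_comp (π a), ← map_mul π, hU]
    _ = π (σ a) (U (π b v)) := by rw [map_mul σ, mul_assoc, map_mul π, mul_apply_eq_comp, hU]

end ContinuousLinearMap

theorem unitaries_implement_automorphisms_general
    {A G H : Type*} [NormedRing A] [StarRing A] [NormedAlgebra ℂ A]
    [Group G]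
    [NormedAddCommGroup H] [InnerProductSpace ℂ H] [CompleteSpace H]
    (α : G → A ≃⋆ₐ[ℂ] A)
    (s : G → A)
    -- GNS triple
    (π : A →⋆ₐ[ℂ] (H →L[ℂ] H)) (Φ : H)
    (hcyclic : Dense (Set.range fun a : A => π a Φ))
    (U : G → H →L[ℂ] H)
    (hU_unitary : ∀ g : G,
      (ContinuousLinearMap.adjoint (U g)).comp (U g) = 1 ∧
      (U g).comp (ContinuousLinearMap.adjoint (U g)) = 1)
    (hU_def : ∀ (g : G) (a : A), U g (π a Φ) = π (α g a * s g⁻¹) Φ) :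
    ∀ (g : G) (a : A),
      ((U g).comp (π a)).comp (ContinuousLinearMap.adjoint (U g)) = π (α g a) := by
  intro g a
  have unitary : U g * ContinuousLinearMap.adjoint (U g) = 1 := (hU_unitary g).2
  have intertwine : SemiconjBy (U g) (π a) (π (α g a)) :=
    ContinuousLinearMap.semiconjBy_of_apply_cyclic hcyclic (hU_def g) a
  calc U g * π a * ContinuousLinearMap.adjoint (U g)
      = π (α g a) * (U g * ContinuousLinearMap.adjoint (U g)) := by
        rw [intertwine.eq, mul_assoc]
    _ = π (α g a) := by rw [unitary, mul_one]

/-- In the GNS representation `(H, π, Φ)` of `(A, φ)`, with `φ`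
`G`-strongly quasi-invariant (Radon–Nikodym elements `x_g` with positive square roots `s_g`),
the unitaries `U_g` defined by `U_g π(a)Φ = π(g(a) x_{g⁻¹}^{1/2})Φ` implement the group:
`U_g π(a) U_g* = π(g(a))`. -/
theorem unitaries_implement_automorphisms
    {A G H : Type*} [NormedRing A] [StarRing A] [CStarRing A] [NormedAlgebra ℂ A]
    [StarModule ℂ A] [CompleteSpace A] [Group G]
    [NormedAddCommGroup H] [InnerProductSpace ℂ H] [CompleteSpace H]
    (α : G → A ≃⋆ₐ[ℂ] A) (hα : ∀ (g h : G) (a : A), α (g * h) a = α g (α h a))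
    (φ : A →ₗ[ℂ] ℂ)
    (hφ_pos : ∀ a : A, 0 ≤ φ (star a * a))
    (hφ_one : φ 1 = 1)
    (hφ_faithful : ∀ a : A, φ (star a * a) = 0 → a = 0)
    (x : G → A) (hx_sa : ∀ g : G, IsSelfAdjoint (x g))
    (hqi : ∀ (g : G) (a : A), φ (α g a) = φ (x g * a))
    (hcent : ∀ (g : G) (a : A), φ (x g * a) = φ (a * x g))
    (hcocycle : ∀ g h : G, x (g * h) = x h * α h⁻¹ (x g))
    (s : G → A) (hs_sq : ∀ g : G, s g * s g = x g) (hs_sa : ∀ g : G, IsSelfAdjoint (s g))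
    -- GNS triple
    (π : A →⋆ₐ[ℂ] (H →L[ℂ] H)) (Φ : H)
    (hGNS : ∀ a b : A, (inner ℂ (π a Φ) (π b Φ) : ℂ) = φ (star a * b))
    (hcyclic : Dense (Set.range fun a : A => π a Φ))
    (U : G → H →L[ℂ] H)
    (hU_unitary : ∀ g : G,
      (ContinuousLinearMap.adjoint (U g)).comp (U g) = 1 ∧
      (U g).comp (ContinuousLinearMap.adjoint (U g)) = 1)
    (hU_def : ∀ (g : G) (a : A), U g (π a Φ) = π (α g a * s g⁻¹) Φ) :
    ∀ (g : G) (a : A),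
      ((U g).comp (π a)).comp (ContinuousLinearMap.adjoint (U g)) = π (α g a) :=
  unitaries_implement_automorphisms_general α s π Φ hcyclic U hU_unitary hU_def
end

section
/- Let W, W₀,…,W_{d} be commuting density matrices on ℂ^d with (1/C) ≤ ‖W_n‖ ≤ C. For a permutation σ with support Λ_σ and W_n = W for n ∉ F (F finite), the Radon–Nikodym element x_σ = ∏_{n∈Λ_σ} j_n(W_{σ(n)} W_n^{-1}) satisfies: if σ(k), σ⁻¹(k) ∉ F ∪ {indices ≤ m₀} appropriately (σ ∈ S_N^{(m₀)} with F ⊆ {0,…,m₀}), then x_σ = ∏_{n∈F} j_n(W W_n^{-1}) j_{σ⁻¹(n)}(W_n W^{-1}). -/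
/-!
Off `F` both `W (σ n)` and `W n` equal `W₀`, so the factor of `x_σ` at `n` is `1` unless `n ∈ F`
or `σ n ∈ F`. As `σ` moves `F` off itself in both directions, these two index sets `F` and
`σ⁻¹ F` are disjoint; the factors on them are `j n (W₀ * (W n)⁻¹)` and
`j (σ⁻¹ n) (W n * W₀⁻¹)`, and since factors at distinct sites commute the product regroups
into the right-hand side.
-/

open scoped ComplexOrder
attribute [local instance] Matrix.normedAddCommGroup

namespace Finset

variable {α β M : Type*} [Monoid M]

theorem noncommProd_map (s : Finset α) (e : α ↪ β) (f : β → M) (comm) :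
    (s.map e).noncommProd f comm =
      s.noncommProd (f ∘ e) (fun _ hx _ hy hxy => comm (mem_map_of_mem e hx) (mem_map_of_mem e hy)
        (e.injective.ne hxy)) := by
  simp only [noncommProd, map_val, Multiset.map_map]

theorem noncommProd_eq_of_subset [DecidableEq α] {s t : Finset α} (f : α → M) (comm)
    (hst : s ⊆ t) (hf : ∀ x ∈ t, x ∉ s → f x = 1) :
    t.noncommProd f comm = s.noncommProd f (comm.mono hst) := by
  have hones : (t \ s).noncommProd f (comm.mono sdiff_subset) = 1 :=
    (noncommProd_eq_pow_card _ _ _ 1 fun x hx => hf x (mem_sdiff.1 hx).1 (mem_sdiff.1 hx).2).trans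
      (one_pow _)
  calc t.noncommProd f comm
      = (s ∪ t \ s).noncommProd f (by rwa [union_sdiff_of_subset hst]) :=
        noncommProd_congr (union_sdiff_of_subset hst).symm (fun _ _ => rfl) _
    _ = s.noncommProd f (comm.mono hst) := by
        rw [noncommProd_union_of_disjoint disjoint_sdiff, hones, mul_one]

theorem noncommProd_of_perm_displaces [DecidableEq α] (f : α → M)
    (hf : Pairwise (Function.onFun Commute f)) (σ : Equiv.Perm α) (Λ F : Finset α)
    (hΛ : ∀ n, σ n ≠ n → n ∈ Λ) (hF : ∀ n ∈ F, σ n ∉ F ∧ σ.symm n ∉ F)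
    (hf_one : ∀ n, n ∉ F → σ n ∉ F → f n = 1) :
    Λ.noncommProd f (hf.set_pairwise _) =
      F.noncommProd f (hf.set_pairwise _) * F.noncommProd (f ∘ σ.symm)
        (fun _ _ _ _ hxy => hf (σ.symm.injective.ne hxy)) := by
  have hdisj : Disjoint F (F.map σ.symm.toEmbedding) := by
    simpa [disjoint_left] using fun n hn => (hF n hn).1
  have hsub : F ∪ F.map σ.symm.toEmbedding ⊆ Λ := by
    intro n hn
    apply hΛ
    rcases mem_union.1 hn with hn | hn
    · exact fun h => (hF n hn).1 (by rwa [h])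
    · obtain ⟨m, hm, rfl⟩ := mem_map.1 hn
      exact fun h => (hF m hm).2 (by
        simp only [Equiv.toEmbedding_apply, Equiv.apply_symm_apply] at h; rwa [← h])
  rw [noncommProd_eq_of_subset f _ hsub, noncommProd_union_of_disjoint hdisj, noncommProd_map]
  · rfl
  · intro n _ hn
    simp only [mem_union, mem_map, not_or, not_exists, not_and] at hn
    exact hf_one n hn.1 fun h => hn.2 _ h (by simp)

end Finset

theorem RN_element_of_outer_permutation_general
    {A : Type*} [Ring A] {d : ℕ}
    (j : ℕ → Matrix (Fin d) (Fin d) ℂ →+* A)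
    (hj_comm : ∀ m n : ℕ, m ≠ n →
      ∀ a b : Matrix (Fin d) (Fin d) ℂ, Commute (j m a) (j n b))
    (W₀ : Matrix (Fin d) (Fin d) ℂ) (W : ℕ → Matrix (Fin d) (Fin d) ℂ)
    (hW₀_pos : W₀.PosDef)
    (F : Finset ℕ) (m₀ : ℕ) (hF : ∀ n ∈ F, n ≤ m₀)
    (hW_off : ∀ n ∉ F, W n = W₀)
    (σ : Equiv.Perm ℕ) (Λ : Finset ℕ) (hΛ : ∀ n : ℕ, σ n ≠ n ↔ n ∈ Λ)
    (hσ : ∀ k ≤ m₀, m₀ < σ k ∧ m₀ < σ.symm k)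
    (hc1 : (Λ : Set ℕ).Pairwise fun m n =>
      Commute (j m (W (σ m) * (W m)⁻¹)) (j n (W (σ n) * (W n)⁻¹)))
    (hc2 : (F : Set ℕ).Pairwise fun m n =>
      Commute (j m (W₀ * (W m)⁻¹) * j (σ.symm m) (W m * W₀⁻¹))
              (j n (W₀ * (W n)⁻¹) * j (σ.symm n) (W n * W₀⁻¹))) :
    Λ.noncommProd (fun n => j n (W (σ n) * (W n)⁻¹)) hc1
      = F.noncommProd (fun n => j n (W₀ * (W n)⁻¹) * j (σ.symm n) (W n * W₀⁻¹)) hc2 := by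
  classical
  have hdisp : ∀ n ∈ F, σ n ∉ F ∧ σ.symm n ∉ F := fun n hn =>
    ⟨fun h => (hσ n (hF n hn)).1.not_ge (hF _ h), fun h => (hσ n (hF n hn)).2.not_ge (hF _ h)⟩
  have hRN_one : ∀ n, n ∉ F → σ n ∉ F → j n (W (σ n) * (W n)⁻¹) = 1 := fun n hn hσn => by
    rw [hW_off _ hn, hW_off _ hσn, Matrix.mul_nonsing_inv _ hW₀_pos.det_pos.ne'.isUnit, map_one]
  rw [Finset.noncommProd_of_perm_displaces _ (fun m n h => hj_comm m n h _ _) σ Λ F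
    (fun n h => (hΛ n).1 h) hdisp hRN_one]
  refine Eq.trans ?_ (Finset.noncommProd_mul_distrib (fun n => j n (W₀ * (W n)⁻¹))
    (fun n => j (σ.symm n) (W n * W₀⁻¹)) (fun m _ n _ h => hj_comm m n h _ _)
    (fun m _ n _ h => hj_comm _ _ (σ.symm.injective.ne h) _ _)
    (fun m hm n hn _ => hj_comm _ _ (fun h => (hdisp m hm).2 (by rwa [h])) _ _)).symm
  congr 1
  · exact Finset.noncommProd_congr rfl (fun n hn => by simp [hW_off _ (hdisp n hn).1]) _
  · exact Finset.noncommProd_congr rfl (fun n hn => by simp [hW_off _ (hdisp n hn).2]) _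

/-- For commuting density matrices `W_n` (equal to `W₀` off the finite set
`F ⊆ {0,…,m₀}`) with norms in `[1/C, C]`, and a permutation `σ ∈ S_N^{(m₀)}` with support
`Λ`, the Radon–Nikodym element `x_σ = ∏_{n∈Λ} j_n(W_{σ(n)} W_n⁻¹)` equals
`∏_{n∈F} j_n(W₀ W_n⁻¹) j_{σ⁻¹(n)}(W_n W₀⁻¹)`. -/
theorem RN_element_of_outer_permutation
    {A : Type*} [Ring A] {d : ℕ}
    (j : ℕ → Matrix (Fin d) (Fin d) ℂ →+* A)
    (hj_comm : ∀ m n : ℕ, m ≠ n →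
      ∀ a b : Matrix (Fin d) (Fin d) ℂ, Commute (j m a) (j n b))
    (W₀ : Matrix (Fin d) (Fin d) ℂ) (W : ℕ → Matrix (Fin d) (Fin d) ℂ)
    (hW_pos : ∀ n, (W n).PosDef) (hW₀_pos : W₀.PosDef)
    (hW_tr : ∀ n, (W n).trace = 1) (hW₀_tr : W₀.trace = 1)
    (hW_comm : ∀ m n, Commute (W m) (W n)) (hW₀_comm : ∀ n, Commute W₀ (W n))
    (C : ℝ) (hC : 1 < C) (hW_norm : ∀ n, 1 / C ≤ ‖W n‖ ∧ ‖W n‖ ≤ C)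
    (F : Finset ℕ) (m₀ : ℕ) (hF : ∀ n ∈ F, n ≤ m₀)
    (hW_off : ∀ n ∉ F, W n = W₀)
    (σ : Equiv.Perm ℕ) (Λ : Finset ℕ) (hΛ : ∀ n : ℕ, σ n ≠ n ↔ n ∈ Λ)
    (hσ : ∀ k ≤ m₀, m₀ < σ k ∧ m₀ < σ.symm k)
    (hc1 : (Λ : Set ℕ).Pairwise fun m n =>
      Commute (j m (W (σ m) * (W m)⁻¹)) (j n (W (σ n) * (W n)⁻¹)))
    (hc2 : (F : Set ℕ).Pairwise fun m n =>
      Commute (j m (W₀ * (W m)⁻¹) * j (σ.symm m) (W m * W₀⁻¹))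
              (j n (W₀ * (W n)⁻¹) * j (σ.symm n) (W n * W₀⁻¹))) :
    Λ.noncommProd (fun n => j n (W (σ n) * (W n)⁻¹)) hc1
      = F.noncommProd (fun n => j n (W₀ * (W n)⁻¹) * j (σ.symm n) (W n * W₀⁻¹)) hc2 :=
  RN_element_of_outer_permutation_general j hj_comm W₀ W hW₀_pos F m₀ hF hW_off σ Λ hΛ hσ hc1 hc2
end
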